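/- Let D be a chain of triangles and let D' be a strongly connected butterfly minor of D containing infinitely many teeth of D. Then D' contains two disjoint rays, namely an out-ray and an in-ray that are vertex-disjoint; consequently D' is not shaped by a star, not a dominated directed ray, and not shaped by a comb. -/

import Mathlib

/-!
Common definitions: directed graphs as vertex/edge sets, directed paths and
walks, rays, arborescences, tree-like models and butterfly minors, laced
paths, knit rays, and the shapes (dominated directed rays, stars, combs,
chains of triangles) from the paper.
-/

universe u

/-- A directed graph on an ambient vertex type `V`, given by a set of vertices
and a set of directed edges (ordered pairs of vertices). -/
structure DGraph (V : Type u) where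
  verts : Set V
  edges : Set (V × V)

namespace DGraph

variable {V : Type u}

instance : Union (DGraph V) := ⟨fun G H => ⟨G.verts ∪ H.verts, G.edges ∪ H.edges⟩⟩
instance : Inter (DGraph V) := ⟨fun G H => ⟨G.verts ∩ H.verts, G.edges ∩ H.edges⟩⟩
instance : HasSubset (DGraph V) := ⟨fun H G => H.verts ⊆ G.verts ∧ H.edges ⊆ G.edges⟩
instance : EmptyCollection (DGraph V) := ⟨⟨∅, ∅⟩⟩

/-- The union of a family of directed graphs. -/
def iUnion {ι : Type} (f : ι → DGraph V) : DGraph V :=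
  ⟨⋃ i, (f i).verts, ⋃ i, (f i).edges⟩

/-- The directed graph obtained by reversing the orientation of every edge. -/
def reverse (G : DGraph V) : DGraph V := ⟨G.verts, {e | (e.2, e.1) ∈ G.edges}⟩

/-- The directed graph consisting of a single vertex and no edges. -/
def single (v : V) : DGraph V := ⟨{v}, ∅⟩

/-- Two vertices joined by both directed edges. -/
def linkBoth (a b : V) : DGraph V := ⟨{a, b}, {(a, b), (b, a)}⟩

/-- A directed triangle (directed cycle of length 3) on `a, b, c`. -/
def triangle (a b c : V) : DGraph V := ⟨{a, b, c}, {(a, b), (b, c), (c, a)}⟩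

/-- The directed graph of a list of vertices with its consecutive edges. -/
def ofList (l : List V) : DGraph V := ⟨{v | v ∈ l}, {e | e ∈ l.zip l.tail}⟩

/-- `𝒟(P)` for the (undirected) path `P` given by the list `l`:
the double path on `l`. -/
def doubleOfList (l : List V) : DGraph V := ofList l ∪ (ofList l).reverse

/-- The directed cycle through the vertices of `l` in order. -/
def cycleOfList (l : List V) : DGraph V :=
  ⟨{v | v ∈ l}, {e | e ∈ l.zip (l.tail ++ l.take 1)}⟩

/-- `G` is a directed cycle. -/
def IsDirectedCycle (G : DGraph V) : Prop :=
  ∃ l : List V, l.Nodup ∧ 2 ≤ l.length ∧ G = cycleOfList l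

/-- The out-oriented ray with vertices `f 0, f 1, …`, rooted at `f 0`. -/
def outRay (f : ℕ → V) : DGraph V :=
  ⟨Set.range f, {e | ∃ n, e = (f n, f (n + 1))}⟩

/-- The in-oriented ray with vertices `f 0, f 1, …`, rooted at `f 0`. -/
def inRay (f : ℕ → V) : DGraph V :=
  ⟨Set.range f, {e | ∃ n, e = (f (n + 1), f n)}⟩

/-- `𝒟(R)` for the undirected ray `R` with vertices `f 0, f 1, …`. -/
def doubleRay (f : ℕ → V) : DGraph V := outRay f ∪ inRay f

/-- The dominated directed ray on an out-oriented ray: the out-oriented ray `f`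
rooted at `f 0` together with the edges `(f (n+1), f 0)`. -/
def domOutRay (f : ℕ → V) : DGraph V :=
  ⟨Set.range f, {e | ∃ n, e = (f n, f (n + 1))} ∪ {e | ∃ n, e = (f (n + 1), f 0)}⟩

/-- The dominated directed ray on an in-oriented ray: the in-oriented ray `f`
rooted at `f 0` together with the edges `(f 0, f (n+1))`. -/
def domInRay (f : ℕ → V) : DGraph V :=
  ⟨Set.range f, {e | ∃ n, e = (f (n + 1), f n)} ∪ {e | ∃ n, e = (f 0, f (n + 1))}⟩

/-- `G` is a dominated directed ray. -/
def IsDominatedDirectedRay (G : DGraph V) : Prop :=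
  ∃ f : ℕ → V, Function.Injective f ∧ (G = domOutRay f ∨ G = domInRay f)

/-- The internal vertices of a path or walk given as a list. -/
def internals (l : List V) : List V := l.tail.dropLast

/-- `l` is a directed path in `G`. -/
def IsPath (G : DGraph V) (l : List V) : Prop :=
  l ≠ [] ∧ l.Nodup ∧ (∀ v ∈ l, v ∈ G.verts) ∧ ∀ e ∈ l.zip l.tail, e ∈ G.edges

/-- `l` is a directed path in `G` with startvertex `a` and endvertex `b`. -/
def IsPathFrom (G : DGraph V) (a b : V) (l : List V) : Prop :=
  IsPath G l ∧ l.head? = some a ∧ l.getLast? = some b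

/-- There is a directed `a`–`b` path in `G`. -/
def Reaches (G : DGraph V) (a b : V) : Prop := ∃ l, IsPathFrom G a b l

/-- `G` is strongly connected. -/
def StronglyConnected (G : DGraph V) : Prop :=
  ∀ a ∈ G.verts, ∀ b ∈ G.verts, Reaches G a b

/-- `l` is a directed `X`–`Y` path in `G`: it starts in `X`, ends in `Y` and
has no internal vertex in `X ∪ Y`. -/
def IsXYPath (G : DGraph V) (X Y : Set V) (l : List V) : Prop :=
  IsPath G l ∧ (∃ a ∈ X, l.head? = some a) ∧ (∃ b ∈ Y, l.getLast? = some b) ∧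
    ∀ v ∈ internals l, v ∉ X ∪ Y

/-- `T` is an in-arborescence rooted at `r`: its underlying graph is a tree
and all edges are directed towards the root `r`. -/
def IsInArborescence (T : DGraph V) (r : V) : Prop :=
  r ∈ T.verts ∧ (∀ e ∈ T.edges, e.1 ∈ T.verts ∧ e.2 ∈ T.verts) ∧
  (∀ w, (r, w) ∉ T.edges) ∧ (∀ v ∈ T.verts, v ≠ r → ∃! w, (v, w) ∈ T.edges) ∧
  (∀ v ∈ T.verts, Reaches T v r)

/-- `T` is an out-arborescence rooted at `r`. -/
def IsOutArborescence (T : DGraph V) (r : V) : Prop := IsInArborescence T.reverse r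

/-- `v` is a leaf of the in-arborescence `T` rooted at `r`. -/
def IsLeafOfInArb (T : DGraph V) (r v : V) : Prop :=
  v ∈ T.verts ∧ v ≠ r ∧ ∀ u, (u, v) ∉ T.edges

/-- `v` is a leaf of the out-arborescence `T` rooted at `r`. -/
def IsLeafOfOutArb (T : DGraph V) (r v : V) : Prop := IsLeafOfInArb T.reverse r v

/-- A tree-like model of `H` in `D`; every vertex of `H` is identified with the
common root of the in- and out-arborescence of its branch set. -/
structure TreeLikeModel (D H : DGraph V) where
  bag : V → DGraph V
  tin : V → DGraph V
  tout : V → DGraph V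
  emap : V × V → V × V
  bag_sub : ∀ v ∈ H.verts, bag v ⊆ D
  bag_disjoint : ∀ v ∈ H.verts, ∀ w ∈ H.verts, v ≠ w → (bag v).verts ∩ (bag w).verts = ∅
  bag_eq : ∀ v ∈ H.verts, bag v = tin v ∪ tout v
  tin_arb : ∀ v ∈ H.verts, IsInArborescence (tin v) v
  tout_arb : ∀ v ∈ H.verts, IsOutArborescence (tout v) v
  roots_eq : ∀ v ∈ H.verts, (tin v).verts ∩ (tout v).verts = {v}
  emap_mem : ∀ e ∈ H.edges, emap e ∈ D.edges
  emap_tail : ∀ e ∈ H.edges, (emap e).1 ∈ (tout e.1).verts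
  emap_head : ∀ e ∈ H.edges, (emap e).2 ∈ (tin e.2).verts

/-- `H` is a butterfly minor of `D`. -/
def IsButterflyMinor (D H : DGraph V) : Prop := Nonempty (TreeLikeModel D H)

/-- `G` is a double path (`𝒟(P)` for an undirected path `P`) with endpoints
`a` and `b`. -/
def IsDoublePath (G : DGraph V) (a b : V) : Prop :=
  ∃ l : List V, l.Nodup ∧ l.head? = some a ∧ l.getLast? = some b ∧ G = doubleOfList l

/-- `G = 𝒟(S)` for a subdivided star `S` with infinitely many leaves, with
centre `c` and branches `q n`; `teeth` is the set of leaves of `S`. -/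
def IsDSubdividedStar (G : DGraph V) (teeth : Set V) : Prop :=
  ∃ (c : V) (q : ℕ → List V),
    (∀ n, (q n).Nodup ∧ (q n).head? = some c ∧ 2 ≤ (q n).length) ∧
    (∀ m n, m ≠ n → ∀ v, v ∈ q m → v ∈ q n → v = c) ∧
    G = iUnion (fun n => doubleOfList (q n)) ∧
    teeth = {v | ∃ n, (q n).getLast? = some v}

/-- `G` is obtained from `𝒟(S)` for a subdivided star `S` by replacing the
centre of infinite degree by a dominated directed ray. -/
def IsRayCentreStar (G : DGraph V) (teeth : Set V) : Prop :=
  ∃ (f : ℕ → V) (R : DGraph V) (g : ℕ → V) (q : ℕ → List V),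
    Function.Injective f ∧ (R = domOutRay f ∨ R = domInRay f) ∧
    (∀ n, (q n).Nodup ∧ (q n).head? = some (g n)) ∧
    (∀ n, ∀ v ∈ q n, v ∉ Set.range f) ∧
    (∀ m n, m ≠ n → ∀ v ∈ q m, v ∉ q n) ∧
    G = R ∪ iUnion (fun n => doubleOfList (q n) ∪ linkBoth (f n) (g n)) ∧
    teeth = {v | ∃ n, (q n).getLast? = some v}

/-- `G` is shaped by a star, with set of teeth `teeth`. -/
def IsShapedByStar (G : DGraph V) (teeth : Set V) : Prop :=
  (IsDominatedDirectedRay G ∧ teeth = G.verts) ∨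
  IsDSubdividedStar G teeth ∨ IsRayCentreStar G teeth

/-- `G = 𝒟(C)` for a comb `C` with spine `f`, branches `q n` attached at
`f (α n)`; `teeth` is the set of teeth of `C`. -/
def IsDComb (G : DGraph V) (teeth : Set V) : Prop :=
  ∃ (f : ℕ → V) (α : ℕ → ℕ) (q : ℕ → List V),
    Function.Injective f ∧ Function.Injective α ∧
    (∀ n, (q n).Nodup ∧ (q n).head? = some (f (α n))) ∧
    (∀ n, ∀ v ∈ (q n).tail, v ∉ Set.range f) ∧
    (∀ m n, m ≠ n → ∀ v ∈ q m, v ∉ q n) ∧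
    G = doubleRay f ∪ iUnion (fun n => doubleOfList (q n)) ∧
    teeth = {v | ∃ n, (q n).getLast? = some v}

/-- The double path on `l` together with both edges between `b` and the first
vertex of `l` (empty if `l` is empty). -/
def branchGraph (b : V) (l : List V) : DGraph V :=
  match l with
  | [] => ∅
  | h :: _ => doubleOfList l ∪ linkBoth b h

/-- `G` is obtained from `𝒟(C)` for a comb `C` by replacing each junction of
`C` by a directed cycle of length 3 as described in the paper.  Position `k`
of the spine is replaced by the piece `S k` (a single vertex, or a directed
triangle at junctions), with `L k`, `R k`, `B k` the vertices of `S k` to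
which the left spine part, the right spine part and the branch attach, and
`t n` the tooth of branch `n`. -/
def IsTriangleComb (G : DGraph V) (teeth : Set V) : Prop :=
  ∃ (α : ℕ → ℕ) (q : ℕ → List V) (S : ℕ → DGraph V) (L R B : ℕ → V) (t : ℕ → V),
    Function.Injective α ∧
    (∀ j k, j ≠ k → (S j).verts ∩ (S k).verts = ∅) ∧
    (∀ n, (q n).Nodup) ∧
    (∀ m n, m ≠ n → ∀ v ∈ q m, v ∉ q n) ∧
    (∀ n, ∀ v ∈ q n, ∀ k, v ∉ (S k).verts) ∧
    (∀ k, L k ∈ (S k).verts ∧ R k ∈ (S k).verts ∧ B k ∈ (S k).verts) ∧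
    (∀ k, (¬ ∃ n, α n = k ∧ 1 ≤ k) → ∃ v, S k = single v) ∧
    (∀ n, 1 ≤ α n → ∃ a b c, a ≠ b ∧ b ≠ c ∧ a ≠ c ∧ S (α n) = triangle a b c) ∧
    (∀ n, 1 ≤ α n → q n ≠ [] →
      L (α n) ≠ R (α n) ∧ L (α n) ≠ B (α n) ∧ R (α n) ≠ B (α n)) ∧
    (∀ n, 1 ≤ α n → q n = [] →
      t n ∈ (S (α n)).verts ∧ L (α n) ≠ R (α n) ∧ t n ≠ L (α n) ∧ t n ≠ R (α n)) ∧
    (∀ n, q n ≠ [] → (q n).getLast? = some (t n)) ∧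
    (∀ n, α n = 0 → q n = [] → t n ∈ (S 0).verts) ∧
    G = iUnion S ∪ iUnion (fun k => linkBoth (R k) (L (k + 1))) ∪
        iUnion (fun n => branchGraph (B (α n)) (q n)) ∧
    teeth = Set.range t

/-- `G` is shaped by a comb, with set of teeth `teeth`. -/
def IsShapedByComb (G : DGraph V) (teeth : Set V) : Prop :=
  IsDComb G teeth ∨ IsTriangleComb G teeth

/-- The core of a chain of triangles: triangles `a i, b i, c i` together with
the edges `(a (i+1), a i)` and `(c i, c (i+1))`. -/
def chainCore (a b c : ℕ → V) : DGraph V :=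
  ⟨Set.range a ∪ Set.range b ∪ Set.range c,
   {e | ∃ i, e = (a i, b i) ∨ e = (b i, c i) ∨ e = (c i, a i) ∨
        e = (a (i + 1), a i) ∨ e = (c i, c (i + 1))}⟩

/-- `G` is a chain of triangles with set of teeth `teeth`. -/
def IsChainOfTriangles (G : DGraph V) (teeth : Set V) : Prop :=
  ∃ (a b c : ℕ → V) (q : ℕ → List V),
    (Function.Injective fun p : ℕ × Fin 3 => ![a, b, c] p.2 p.1) ∧
    (∀ i, (q i).Nodup ∧ (q i).head? = some (b i)) ∧
    (∀ i, ∀ v ∈ (q i).tail, ∀ j, v ≠ a j ∧ v ≠ b j ∧ v ≠ c j) ∧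
    (∀ i j, i ≠ j → ∀ v ∈ q i, v ∉ q j) ∧
    G = chainCore a b c ∪ iUnion (fun i => doubleOfList (q i)) ∧
    teeth = {v | ∃ i, (q i).getLast? = some v}

/-- `G` is a subdivided in-star with centre (root) `c` and all edges directed
towards `c`; it has infinitely many leaves and `teeth` is its set of leaves. -/
def IsSubdividedInStar (G : DGraph V) (teeth : Set V) : Prop :=
  ∃ (c : V) (q : ℕ → List V),
    (∀ n, (q n).Nodup ∧ (q n).getLast? = some c ∧ 2 ≤ (q n).length) ∧
    (∀ m n, m ≠ n → ∀ v, v ∈ q m → v ∈ q n → v = c) ∧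
    G = iUnion (fun n => ofList (q n)) ∧
    teeth = {v | ∃ n, (q n).head? = some v}

/-- `G` is a subdivided out-star. -/
def IsSubdividedOutStar (G : DGraph V) (teeth : Set V) : Prop :=
  IsSubdividedInStar G.reverse teeth

/-- `G = 𝒟(K_{1,∞})`. -/
def IsDInfiniteStar (G : DGraph V) : Prop :=
  ∃ (c : V) (g : ℕ → V), Function.Injective g ∧ (∀ n, g n ≠ c) ∧
    G = ⟨insert c (Set.range g), {e | ∃ n, e = (c, g n) ∨ e = (g n, c)}⟩

/-- `G = 𝒟(R)` for an undirected ray `R`. -/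
def IsDoubleRayGraph (G : DGraph V) : Prop :=
  ∃ f : ℕ → V, Function.Injective f ∧ G = doubleRay f

/-- `G` is a subdivision of a dominated directed ray (parallel edges being
collapsed): the ray `f`, its original vertices sitting at the positions
`α n ≥ 1`, and for each `n` a subdivided dominating edge `p n`. -/
def IsSubdivDominatedRay (G : DGraph V) : Prop :=
  (∃ (f : ℕ → V) (α : ℕ → ℕ) (p : ℕ → List V),
    Function.Injective f ∧ StrictMono α ∧ (∀ n, 1 ≤ α n) ∧
    (∀ n, (p n).Nodup ∧ (p n).head? = some (f (α n)) ∧ (p n).getLast? = some (f 0) ∧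
      2 ≤ (p n).length) ∧
    (∀ n, ∀ v ∈ internals (p n), v ∉ Set.range f) ∧
    (∀ m n, m ≠ n → ∀ v ∈ internals (p m), v ∉ p n) ∧
    G = outRay f ∪ iUnion (fun n => ofList (p n))) ∨
  (∃ (f : ℕ → V) (α : ℕ → ℕ) (p : ℕ → List V),
    Function.Injective f ∧ StrictMono α ∧ (∀ n, 1 ≤ α n) ∧
    (∀ n, (p n).Nodup ∧ (p n).head? = some (f 0) ∧ (p n).getLast? = some (f (α n)) ∧
      2 ≤ (p n).length) ∧
    (∀ n, ∀ v ∈ internals (p n), v ∉ Set.range f) ∧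
    (∀ m n, m ≠ n → ∀ v ∈ internals (p m), v ∉ p n) ∧
    G = inRay f ∪ iUnion (fun n => ofList (p n)))

section Laced

variable [DecidableEq V]

/-- The segment of the path `l` from `x` to `y` (inclusive). -/
def seg (l : List V) (x y : V) : List V :=
  (l.drop (l.idxOf x)).take (l.idxOf y + 1 - l.idxOf x)

/-- `x ≤ y` along the path `l`. -/
def leIn (l : List V) (x y : V) : Prop :=
  x ∈ l ∧ y ∈ l ∧ l.idxOf x ≤ l.idxOf y

/-- `x < y` along the path `l`. -/
def ltIn (l : List V) (x y : V) : Prop :=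
  x ∈ l ∧ y ∈ l ∧ l.idxOf x < l.idxOf y

/-- The directed paths `P` and `Q` are laced. -/
def Laced (P Q : List V) : Prop :=
  (∀ v ∈ P, v ∉ Q) ∨
  ∃ (ℓ : ℕ) (x y : ℕ → V), 1 ≤ ℓ ∧
    (∀ i, 1 ≤ i → i ≤ ℓ → leIn P (x i) (y i) ∧ leIn Q (x i) (y i)) ∧
    (∀ i, 1 ≤ i → i < ℓ → ltIn P (y i) (x (i + 1)) ∧ ltIn Q (y (i + 1)) (x i)) ∧
    (∀ i, 1 ≤ i → i ≤ ℓ → seg P (x i) (y i) = seg Q (x i) (y i)) ∧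
    (∀ i, 1 ≤ i → i < ℓ → ∀ v ∈ internals (seg Q (y (i + 1)) (x i)), v ∉ P) ∧
    (∀ v ∈ Q.take (Q.idxOf (x ℓ) + 1), v ∈ P → v = x ℓ) ∧
    (∀ v ∈ Q.drop (Q.idxOf (y 1)), v ∈ P → v = y 1)

end Laced

/-- The out-ray `f` and the in-ray `g` with common root are knit:
`x i = f (p i) = g (p' i)` and `y i = f (q i) = g (q' i)` are the shared
segments, in the orders required in the paper. -/
def Knit (f g : ℕ → V) : Prop :=
  f 0 = g 0 ∧
  ∃ p q p' q' : ℕ → ℕ,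
    (∀ i, 0 < p i ∧ p i ≤ q i ∧ q i < p (i + 1)) ∧
    (∀ i, 0 < q' i ∧ q' i ≤ p' i ∧ p' i < q' (i + 1)) ∧
    (∀ i, q i - p i = p' i - q' i) ∧
    (∀ i, ∀ k ≤ q i - p i, f (p i + k) = g (p' i - k)) ∧
    (∀ i, ∀ m, p' i < m → m < q' (i + 1) → g m ∉ Set.range f) ∧
    (∀ m, 0 < m → m < q' 0 → g m ∉ Set.range f)

section Contract

variable [DecidableEq V]

/-- The map identifying `v` with `u`. -/
def contractFun (u v : V) : V → V := fun x => if x = v then u else x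

/-- Contracting the edge `(u, v)` of `G` onto the vertex `u`. -/
def contractEdge (G : DGraph V) (u v : V) : DGraph V :=
  ⟨contractFun u v '' G.verts,
   {e | e ≠ (u, u) ∧ ∃ e' ∈ G.edges, e = (contractFun u v e'.1, contractFun u v e'.2)}⟩

end Contract

/-- The edge `(u, v)` of `G` is butterfly contractible. -/
def IsButterflyContractibleEdge (G : DGraph V) (u v : V) : Prop :=
  (u, v) ∈ G.edges ∧
  ((∀ w, (u, w) ∈ G.edges → w = v) ∨ (∀ w, (w, v) ∈ G.edges → w = u))

/-- `G` and `H` are isomorphic directed graphs. -/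
def Isom (G H : DGraph V) : Prop :=
  ∃ φ : V → V, Set.BijOn φ G.verts H.verts ∧
    ∀ u ∈ G.verts, ∀ v ∈ G.verts, ((u, v) ∈ G.edges ↔ (φ u, φ v) ∈ H.edges)

end DGraph

/-!
In a chain of triangles the only edge from a column `≤ k` to a column `> k` is `(c k, c (k + 1))`,
and the only edge back is `(a (k + 1), a k)`. As `D'` is strongly connected and has teeth
arbitrarily far to the right, the model of `D'` uses every `c`-edge far enough to the right, each
inside one branch set or as the image of an edge of `D'`. A branch set contains only finitely
many `c k`: otherwise it would contain `c i` in its out-tree or `a i` in its in-tree for a column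
`i` to its right whose tooth lies in `D'`, whereas the path of `D'` between that tooth and the
root leaves the tooth path only into `c i`, and enters it only from `a i`, in another branch set.
So the branch sets met by `c k₀, c (k₀ + 1), …`, with repetitions deleted, form an out-ray of
`D'`. Reversing all edges exchanges the `a`- and `c`-lanes and yields an in-ray met by the `a k`.
A branch set whose in- and out-tree both meet the `c`-lane has a `c`-vertex as its root, and
similarly for the `a`-lane, so the two rays are disjoint.

Stars, dominated directed rays and combs consist of a core with finite pieces hanging from single
vertices, so every ray eventually stays in the core. A dominated directed ray contains no in-ray
or no out-ray, the double of a star has no ray at all, and in a comb, with or without triangles at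
its junctions, every ray eventually runs to the right along the spine through all its junctions,
so that any two rays meet.
-/

open Relation

theorem Relation.ReflTransGen.exists_boundary {α : Type*} {r : α → α → Prop} {a b : α}
    {P : α → Prop} (h : ReflTransGen r a b) (ha : P a) (hb : ¬ P b) :
    ∃ x y, r x y ∧ P x ∧ ¬ P y := by
  induction h with
  | refl => exact absurd ha hb
  | @tail c d _ hcd ih =>
    by_cases hc : P c
    · exact ⟨c, d, hcd, hc, hb⟩
    · exact ih hc

theorem List.forall_mem_zip_tail_iff_isChain {α : Type*} {R : α → α → Prop} {l : List α} :
    (∀ e ∈ l.zip l.tail, R e.1 e.2) ↔ l.IsChain R := by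
  induction l using List.twoStepInduction with
  | nil => simp
  | singleton => simp
  | cons_cons a b l _ ih => simp_all [List.isChain_cons_cons]

theorem Function.Injective.exists_forall_ge_notMem {α : Type*} {ρ : ℕ → α}
    (hρ : Function.Injective ρ) {s : Set α} (hs : s.Finite) : ∃ N, ∀ n, N ≤ n → ρ n ∉ s := by
  obtain ⟨N, hN⟩ := (hs.preimage hρ.injOn).bddAbove
  exact ⟨N + 1, fun n hn h => by have := hN h; omega⟩

theorem exists_ge_mem_of_infinite {α : Type*} {s : Set α} {f : ℕ → α}
    (h : (s ∩ Set.range f).Infinite) (N : ℕ) : ∃ i, N ≤ i ∧ f i ∈ s := by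
  by_contra! hN
  refine h (((Set.finite_Iio N).image f).subset ?_)
  rintro _ ⟨hv, i, rfl⟩
  exact ⟨i, lt_of_not_ge fun hi => hN i hi hv, rfl⟩

theorem not_injective_of_forall_eq_zero_or_eq_succ {φ : ℕ → ℕ}
    (h : ∀ n, φ n = 0 ∨ φ n = φ (n + 1) + 1) : ¬ Function.Injective φ := fun hφ => by
  obtain ⟨N, hN⟩ := hφ.exists_forall_ge_notMem (Set.finite_singleton 0)
  have hsucc : ∀ n, N ≤ n → φ n = φ (n + 1) + 1 := fun n hn => (h n).resolve_left (hN n hn)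
  have key : ∀ k, φ (N + k) + k = φ N := fun k => by
    induction k with
    | zero => rfl
    | succ k ih =>
      show φ (N + k + 1) + (k + 1) = φ N
      have := hsucc (N + k) (by omega)
      omega
  exact hN (N + φ N) (by omega) (by have := key (φ N); simp only [Set.mem_singleton_iff]; omega)

theorem exists_strictMono_of_finite_fibers {α : Type*} (u : ℕ → α) {P : ℕ → Prop}
    (hfin : ∀ x, {n | u n = x}.Finite) (hstep : ∀ n, u n = u (n + 1) ∨ P n) :
    ∃ φ : ℕ → ℕ, StrictMono φ ∧ (∀ i, P (φ i)) ∧ (∀ i, u (φ i + 1) = u (φ (i + 1))) ∧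
      Function.Injective (u ∘ φ) := by
  obtain ⟨last, u_last, le_last, last_congr⟩ : ∃ last : ℕ → ℕ, (∀ n, u (last n) = u n) ∧
      (∀ n m, u m = u n → m ≤ last n) ∧ (∀ n m, u m = u n → last m = last n) :=
    ⟨fun n => sSup {m | u m = u n},
      fun n => Nat.sSup_mem (s := {m | u m = u n}) ⟨n, rfl⟩ (hfin _).bddAbove,
      fun n m h => le_csSup (hfin _).bddAbove h,
      fun n m h => by simp only [h]⟩
  let φ : ℕ → ℕ := fun i => Nat.rec (last 0) (fun _ p => last (p + 1)) i
  have hfix : ∀ i, last (φ i) = φ i := by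
    intro i; cases i <;> exact last_congr _ _ (u_last _)
  have hnext : ∀ i, u (φ i + 1) = u (φ (i + 1)) := fun i => (u_last _).symm
  have hmono : StrictMono φ := strictMono_nat_of_lt_succ fun i => le_last _ _ rfl
  have hne : ∀ i j, i ≤ j → u (φ j + 1) ≠ u (φ i) := fun i j hij h => by
    have := le_last _ _ h
    have := hmono.monotone hij
    rw [hfix] at *
    omega
  refine ⟨φ, hmono, fun i => (hstep (φ i)).resolve_left fun h => hne i i le_rfl h.symm, hnext, ?_⟩
  refine Function.Injective.of_lt_imp_ne fun i j hij h => ?_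
  obtain ⟨j, rfl⟩ : ∃ j', j = j' + 1 := ⟨j - 1, by omega⟩
  exact hne i j (by omega) ((hnext j).trans h.symm)

namespace DGraph

variable {V : Type u} {G : DGraph V}

protected theorem subset_trans {A B C : DGraph V} (h₁ : A ⊆ B) (h₂ : B ⊆ C) : A ⊆ C :=
  ⟨h₁.1.trans h₂.1, h₁.2.trans h₂.2⟩

theorem reverse_subset_reverse {H : DGraph V} (h : G ⊆ H) : G.reverse ⊆ H.reverse :=
  ⟨h.1, fun _ he => h.2 he⟩

theorem IsPath.reverse {l : List V} (h : G.IsPath l) : G.reverse.IsPath l.reverse := by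
  obtain ⟨hne, hnd, hv, he⟩ := h
  refine ⟨by simpa using hne, List.nodup_reverse.2 hnd, fun v hv' => hv v (List.mem_reverse.1 hv'),
    List.forall_mem_zip_tail_iff_isChain (R := fun x y => (y, x) ∈ G.edges) |>.2 ?_⟩
  exact List.isChain_reverse.2 (List.forall_mem_zip_tail_iff_isChain.1 he)

theorem Reaches.reverse {a b : V} (h : G.Reaches a b) : G.reverse.Reaches b a := by
  obtain ⟨l, hl, ha, hb⟩ := h
  exact ⟨l.reverse, hl.reverse, by rwa [List.head?_reverse], by rwa [List.getLast?_reverse]⟩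

theorem StronglyConnected.reverse (h : G.StronglyConnected) : G.reverse.StronglyConnected :=
  fun a ha b hb => (h b hb a ha).reverse

def Arc (G : DGraph V) (u v : V) : Prop := (u, v) ∈ G.edges ∧ u ∈ G.verts ∧ v ∈ G.verts

theorem Reaches.reflTransGen {a b : V} (h : G.Reaches a b) : ReflTransGen G.Arc a b := by
  obtain ⟨l, ⟨-, -, hv, he⟩, ha, hb⟩ := h
  induction l generalizing a with
  | nil => simp at ha
  | cons x l ih =>
    obtain rfl : x = a := by simpa using ha
    cases l with
    | nil =>
      obtain rfl : x = b := by simpa using hb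
      exact .refl
    | cons y l =>
      refine .head ⟨he (x, y) (by simp), hv x (by simp), hv y (by simp)⟩
        (ih (fun v hv' => hv v (List.mem_cons_of_mem x hv'))
          (fun e he' => he e (by simp_all)) rfl (by simpa using hb))

theorem Reaches.exists_boundary {a b : V} {P : V → Prop} (h : G.Reaches a b) (ha : P a)
    (hb : ¬ P b) : ∃ x y, G.Arc x y ∧ P x ∧ ¬ P y :=
  h.reflTransGen.exists_boundary ha hb

/-! ### Tree-like models -/

namespace TreeLikeModel

variable {D H : DGraph V} (M : TreeLikeModel D H) {v : V}

theorem tin_subset_bag (hv : v ∈ H.verts) : M.tin v ⊆ M.bag v := by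
  rw [M.bag_eq v hv]; exact ⟨Set.subset_union_left, Set.subset_union_left⟩

theorem tout_subset_bag (hv : v ∈ H.verts) : M.tout v ⊆ M.bag v := by
  rw [M.bag_eq v hv]; exact ⟨Set.subset_union_right, Set.subset_union_right⟩

theorem tin_subset_graph (hv : v ∈ H.verts) : M.tin v ⊆ D :=
  DGraph.subset_trans (M.tin_subset_bag hv) (M.bag_sub v hv)

theorem tout_subset_graph (hv : v ∈ H.verts) : M.tout v ⊆ D :=
  DGraph.subset_trans (M.tout_subset_bag hv) (M.bag_sub v hv)

theorem eq_of_mem_bag {u w x : V} (hu : u ∈ H.verts) (hw : w ∈ H.verts)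
    (hxu : x ∈ (M.bag u).verts) (hxw : x ∈ (M.bag w).verts) : u = w := by
  by_contra h
  exact (M.bag_disjoint u hu w hw h).subset ⟨hxu, hxw⟩

theorem eq_root {x : V} (hv : v ∈ H.verts) (hin : x ∈ (M.tin v).verts)
    (hout : x ∈ (M.tout v).verts) : x = v :=
  (M.roots_eq v hv).subset ⟨hin, hout⟩

theorem reaches_tin {x : V} (hv : v ∈ H.verts) (hx : x ∈ (M.tin v).verts) :
    (M.tin v).Reaches x v :=
  (M.tin_arb v hv).2.2.2.2 x hx

theorem reaches_tout {x : V} (hv : v ∈ H.verts) (hx : x ∈ (M.tout v).verts) :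
    (M.tout v).Reaches v x :=
  ((M.tout_arb v hv).2.2.2.2 x hx).reverse

def reverse : TreeLikeModel D.reverse H.reverse where
  bag v := (M.tout v).reverse ∪ (M.tin v).reverse
  tin v := (M.tout v).reverse
  tout v := (M.tin v).reverse
  emap e := (M.emap (e.2, e.1)).swap
  bag_sub v hv := by
    have hin := M.tin_subset_graph hv
    have hout := M.tout_subset_graph hv
    exact ⟨Set.union_subset hout.1 hin.1,
      Set.union_subset (fun _ he => hout.2 he) (fun _ he => hin.2 he)⟩
  bag_disjoint u hu w hw huw := by
    have h := M.bag_disjoint u hu w hw huw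
    rw [M.bag_eq u hu, M.bag_eq w hw] at h
    change ((M.tout u).verts ∪ (M.tin u).verts) ∩ ((M.tout w).verts ∪ (M.tin w).verts) = ∅
    rw [Set.union_comm (M.tout u).verts, Set.union_comm (M.tout w).verts]
    exact h
  bag_eq _ _ := rfl
  tin_arb v hv := M.tout_arb v hv
  tout_arb v hv := M.tin_arb v hv
  roots_eq v hv := by
    change (M.tout v).verts ∩ (M.tin v).verts = {v}
    rw [Set.inter_comm]; exact M.roots_eq v hv
  emap_mem e he := M.emap_mem _ he
  emap_tail e he := M.emap_head _ he
  emap_head e he := M.emap_tail _ he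

/-- The model of an edge `(s, t)` of `H` is a walk of `D` from `s` through the out-tree of `s`,
the edge `μ (s, t)` and the in-tree of `t` to `t`. -/
theorem exists_boundary_edge {P : V → Prop} {s t : V} (hst : H.Arc s t) (hs : P s)
    (ht : ¬ P t) : ∃ p r, (p, r) ∈ D.edges ∧ P p ∧ ¬ P r ∧
      ((p ∈ (M.tout s).verts ∧ r ∈ (M.tout s).verts) ∨
        (p ∈ (M.tout s).verts ∧ r ∈ (M.tin t).verts) ∨
        (p ∈ (M.tin t).verts ∧ r ∈ (M.tin t).verts)) := by
  obtain ⟨he, hsv, htv⟩ := hst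
  have hx := M.emap_tail _ he
  have hy := M.emap_head _ he
  by_cases hPx : P (M.emap (s, t)).1
  · by_cases hPy : P (M.emap (s, t)).2
    · obtain ⟨p, r, ⟨hpr, hp, hr⟩, hPp, hPr⟩ :=
        (M.reaches_tin htv hy).exists_boundary hPy ht
      exact ⟨p, r, (M.tin_subset_graph htv).2 hpr, hPp, hPr, .inr (.inr ⟨hp, hr⟩)⟩
    · exact ⟨_, _, M.emap_mem _ he, hPx, hPy, .inr (.inl ⟨hx, hy⟩)⟩
  · obtain ⟨p, r, ⟨hpr, hp, hr⟩, hPp, hPr⟩ :=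
      (M.reaches_tout hsv hx).exists_boundary hs hPx
    exact ⟨p, r, (M.tout_subset_graph hsv).2 hpr, hPp, hPr, .inl ⟨hp, hr⟩⟩

theorem exists_boundary_edge_of_reaches {P : V → Prop} {w w' : V}
    (h : H.Reaches w w') (hw : P w) (hw' : ¬ P w') :
    ∃ s t p r, H.Arc s t ∧ P s ∧ (p, r) ∈ D.edges ∧ P p ∧ ¬ P r ∧
      ((p ∈ (M.tout s).verts ∧ r ∈ (M.tout s).verts) ∨
        (p ∈ (M.tout s).verts ∧ r ∈ (M.tin t).verts) ∨
        (p ∈ (M.tin t).verts ∧ r ∈ (M.tin t).verts)) := by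
  obtain ⟨s, t, hst, hs, ht⟩ := h.exists_boundary hw hw'
  obtain ⟨p, r, hpr, hp, hr, hcases⟩ := M.exists_boundary_edge hst hs ht
  exact ⟨s, t, p, r, hst, hs, hpr, hp, hr, hcases⟩

end TreeLikeModel

/-! ### Chains of triangles -/

/-- The features of a chain of triangles that the argument uses: the vertices are sorted into
columns by `col`; the only edges crossing the cut between columns `k` and `k + 1` are
`(c k, c (k + 1))` and `(a (k + 1), a k)`; and the set `Q i` (the tooth path of column `i`)
is left only into `c i` and entered only from `a i`. -/
structure ChainFrame (V : Type u) where
  D : DGraph V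
  col : V → ℕ
  a : ℕ → V
  c : ℕ → V
  Q : ℕ → Set V
  tooth : ℕ → V
  col_a : ∀ i, col (a i) = i
  col_c : ∀ i, col (c i) = i
  a_ne_c : ∀ i j, a i ≠ c j
  tooth_mem : ∀ i, tooth i ∈ Q i
  col_of_mem : ∀ i, ∀ v ∈ Q i, col v = i
  right_edge : ∀ u v k, (u, v) ∈ D.edges → col u ≤ k → k < col v → u = c k ∧ v = c (k + 1)
  left_edge : ∀ u v k, (u, v) ∈ D.edges → col v ≤ k → k < col u → u = a (k + 1) ∧ v = a k
  exit_edge : ∀ u v i, (u, v) ∈ D.edges → u ∈ Q i → v ∉ Q i → v = c i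
  entry_edge : ∀ u v i, (u, v) ∈ D.edges → u ∉ Q i → v ∈ Q i → u = a i

namespace ChainFrame

variable (C : ChainFrame V)

def reverse : ChainFrame V where
  D := C.D.reverse
  col := C.col
  a := C.c
  c := C.a
  Q := C.Q
  tooth := C.tooth
  col_a := C.col_c
  col_c := C.col_a
  a_ne_c i j h := C.a_ne_c j i h.symm
  tooth_mem := C.tooth_mem
  col_of_mem := C.col_of_mem
  right_edge u v k h hu hv := (C.left_edge v u k h hu hv).symm
  left_edge u v k h hv hu := (C.right_edge v u k h hv hu).symm
  exit_edge u v i h hu hv := C.entry_edge v u i h hv hu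
  entry_edge u v i h hu hv := C.exit_edge v u i h hv hu

variable {C}

theorem c_mem_of_reaches {G : DGraph V} (hG : G ⊆ C.D) {x y : V} (h : G.Reaches x y) {k : ℕ}
    (hx : C.col x ≤ k) (hy : k < C.col y) : C.c k ∈ G.verts ∧ C.c (k + 1) ∈ G.verts := by
  obtain ⟨p, r, ⟨hpr, hp, hr⟩, hPp, hPr⟩ :=
    h.exists_boundary (P := fun v => C.col v ≤ k) hx (by omega)
  obtain ⟨rfl, rfl⟩ := C.right_edge p r k (hG.2 hpr) hPp (by omega)
  exact ⟨hp, hr⟩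

theorem a_mem_of_reaches {G : DGraph V} (hG : G ⊆ C.D) {x y : V} (h : G.Reaches x y) {k : ℕ}
    (hx : k < C.col x) (hy : C.col y ≤ k) : C.a (k + 1) ∈ G.verts ∧ C.a k ∈ G.verts :=
  (C.reverse.c_mem_of_reaches (reverse_subset_reverse hG) h.reverse hy hx).symm

variable (C) {D' : DGraph V} (M : TreeLikeModel C.D D')

/-- The path of `D'` from the tooth of column `i` back to `v` has to leave `Q i` through `c i`,
inside a branch set other than that of `v`. -/
theorem c_notMem_tout (hsc : D'.StronglyConnected) {v : V} (hv : v ∈ D'.verts) {i : ℕ}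
    (hi : C.col v < i) (ht : C.tooth i ∈ D'.verts) : C.c i ∉ (M.tout v).verts := by
  intro hci
  have hvQ : v ∉ C.Q i := fun h => by have := C.col_of_mem i v h; omega
  obtain ⟨s, t, p, r, ⟨-, hs, htD⟩, hsQ, hpr, hp, hr, hcases⟩ :=
    M.exists_boundary_edge_of_reaches (P := (· ∈ C.Q i)) (hsc _ ht _ hv) (C.tooth_mem i) hvQ
  obtain rfl := C.exit_edge p r i hpr hp hr
  have hci' := (M.tout_subset_bag hv).1 hci
  rcases hcases with ⟨-, hr⟩ | ⟨-, hr⟩ | ⟨-, hr⟩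
  · exact hvQ (M.eq_of_mem_bag hs hv ((M.tout_subset_bag hs).1 hr) hci' ▸ hsQ)
  all_goals
    obtain rfl := M.eq_of_mem_bag htD hv ((M.tin_subset_bag htD).1 hr) hci'
    have := C.col_c i
    rw [M.eq_root htD hr hci] at this
    omega

theorem a_notMem_tin (hsc : D'.StronglyConnected) {v : V} (hv : v ∈ D'.verts) {i : ℕ}
    (hi : C.col v < i) (ht : C.tooth i ∈ D'.verts) : C.a i ∉ (M.tin v).verts :=
  C.reverse.c_notMem_tout M.reverse hsc.reverse hv hi ht

theorem lt_of_c_mem_bag (hsc : D'.StronglyConnected) {v : V} (hv : v ∈ D'.verts) {i : ℕ}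
    (hi : C.col v < i) (ht : C.tooth i ∈ D'.verts) {k : ℕ} (hk : C.c k ∈ (M.bag v).verts) :
    k < i := by
  by_contra! hik
  rw [M.bag_eq v hv] at hk
  rcases hk with hin | hout
  · -- the path from `c k` down to `v` in the in-tree runs leftwards through `a i`
    obtain ⟨j, rfl⟩ : ∃ j, i = j + 1 := ⟨i - 1, by omega⟩
    exact C.a_notMem_tin M hsc hv hi ht (C.a_mem_of_reaches (M.tin_subset_graph hv)
      (M.reaches_tin hv hin) (k := j) (by rw [C.col_c]; omega) (by omega)).1
  · refine C.c_notMem_tout M hsc hv hi ht ?_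
    rcases hik.eq_or_lt with rfl | hik
    · exact hout
    · exact (C.c_mem_of_reaches (M.tout_subset_graph hv) (M.reaches_tout hv hout) (k := i)
        (by omega) (by rw [C.col_c]; omega)).1

theorem exists_c_transition (hsc : D'.StronglyConnected) {i j k : ℕ}
    (hi : C.tooth i ∈ D'.verts) (hj : C.tooth j ∈ D'.verts) (hik : i ≤ k) (hkj : k < j) :
    ∃ s t, s ∈ D'.verts ∧ t ∈ D'.verts ∧ C.c k ∈ (M.bag s).verts ∧
      C.c (k + 1) ∈ (M.bag t).verts ∧
      (s = t ∨ (D'.Arc s t ∧ C.c k ∈ (M.tout s).verts ∧ C.c (k + 1) ∈ (M.tin t).verts)) := by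
  have hcol := fun n => C.col_of_mem n _ (C.tooth_mem n)
  obtain ⟨s, t, p, r, hst, -, hpr, hp, hr, hcases⟩ :=
    M.exists_boundary_edge_of_reaches (P := fun v => C.col v ≤ k) (hsc _ hi _ hj)
      (by simp only [hcol]; exact hik) (by simp only [hcol]; omega)
  obtain ⟨rfl, rfl⟩ := C.right_edge p r k hpr hp (by omega)
  have hs := hst.2.1
  have ht := hst.2.2
  rcases hcases with ⟨hp, hr⟩ | ⟨hp, hr⟩ | ⟨hp, hr⟩
  · exact ⟨s, s, hs, hs, (M.tout_subset_bag hs).1 hp, (M.tout_subset_bag hs).1 hr, .inl rfl⟩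
  · exact ⟨s, t, hs, ht, (M.tout_subset_bag hs).1 hp, (M.tin_subset_bag ht).1 hr,
      .inr ⟨hst, hp, hr⟩⟩
  · exact ⟨t, t, ht, ht, (M.tin_subset_bag ht).1 hp, (M.tin_subset_bag ht).1 hr, .inl rfl⟩

def CarriesC (x : V) : Prop :=
  ∃ κ σ, κ ≤ σ ∧ C.c κ ∈ (M.tin x).verts ∧ C.c σ ∈ (M.tout x).verts

/-- Since `c`-vertices can only be passed rightwards, the column of `x` clamped to `[κ, σ]` is
the column of a `c`-vertex in both trees of `x`, which is therefore their common root. -/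
theorem exists_eq_c_of_carriesC {x : V} (hx : x ∈ D'.verts) (h : C.CarriesC M x) :
    ∃ m, x = C.c m := by
  obtain ⟨κ, σ, hκσ, hκ, hσ⟩ := h
  set m := max κ (min (C.col x) σ) with hm_def
  have hin : C.c m ∈ (M.tin x).verts := by
    by_cases hm : m = κ
    · rwa [hm]
    obtain ⟨k, hk⟩ : ∃ k, m = k + 1 := ⟨m - 1, by omega⟩
    rw [hk]
    exact (C.c_mem_of_reaches (M.tin_subset_graph hx) (M.reaches_tin hx hκ) (k := k)
      (by rw [C.col_c]; omega) (by omega)).2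
  have hout : C.c m ∈ (M.tout x).verts := by
    by_cases hm : m = σ
    · rwa [hm]
    exact (C.c_mem_of_reaches (M.tout_subset_graph hx) (M.reaches_tout hx hσ) (k := m)
      (by omega) (by rw [C.col_c]; omega)).1
  exact ⟨m, (M.eq_root hx hin hout).symm⟩

/-- The branch sets containing `c i₀, c (i₀ + 1), …` form, after deleting repetitions, an
out-ray of `D'`; each branch set occurs only finitely often by `lt_of_c_mem_bag`. -/
theorem exists_outRay_carriesC (hsc : D'.StronglyConnected)
    (hteeth : ∀ N, ∃ i, N ≤ i ∧ C.tooth i ∈ D'.verts) :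
    ∃ f : ℕ → V, Function.Injective f ∧ outRay f ⊆ D' ∧ ∀ n, C.CarriesC M (f n) := by
  obtain ⟨i₀, -, hi₀⟩ := hteeth 0
  have htrans : ∀ n, ∃ s t, s ∈ D'.verts ∧ t ∈ D'.verts ∧ C.c (i₀ + n) ∈ (M.bag s).verts ∧
      C.c (i₀ + n + 1) ∈ (M.bag t).verts ∧ (s = t ∨ (D'.Arc s t ∧
        C.c (i₀ + n) ∈ (M.tout s).verts ∧ C.c (i₀ + n + 1) ∈ (M.tin t).verts)) := fun n => by
    obtain ⟨j, hj, hjD⟩ := hteeth (i₀ + n + 1)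
    exact C.exists_c_transition M hsc hi₀ hjD (by omega) (by omega)
  choose s t hs ht hcs hct hst using htrans
  have hts : ∀ n, t n = s (n + 1) := fun n =>
    M.eq_of_mem_bag (ht n) (hs (n + 1)) (hct n) (hcs (n + 1))
  have hfin : ∀ x, {n | s n = x}.Finite := by
    intro x
    by_cases hx : x ∈ D'.verts
    · obtain ⟨i, hi, hiD⟩ := hteeth (C.col x + 1)
      refine (Set.finite_Iio i).subset fun n (hn : s n = x) => ?_
      have := C.lt_of_c_mem_bag M hsc hx (by omega) hiD (hn ▸ hcs n)
      exact show n < i by omega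
    · exact Set.finite_empty.subset fun n (hn : s n = x) => hx (hn ▸ hs n)
  obtain ⟨φ, hφ, hP, hnext, hinj⟩ := exists_strictMono_of_finite_fibers s hfin
    (fun n => by rw [← hts]; exact hst n)
  refine ⟨fun i => s (φ (i + 1)), hinj.comp (Nat.succ_injective), ⟨?_, ?_⟩, fun i => ?_⟩
  · rintro _ ⟨i, rfl⟩
    exact hs _
  · rintro _ ⟨i, rfl⟩
    have := (hP (i + 1)).1.1
    rwa [hts, hnext] at this
  · refine ⟨i₀ + φ i + 1, i₀ + φ (i + 1), by have := hφ (Nat.lt_add_one i); omega, ?_,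
      (hP (i + 1)).2.1⟩
    have := (hP i).2.2
    rwa [hts, hnext] at this

theorem exists_disjoint_rays (hm : C.D.IsButterflyMinor D') (hsc : D'.StronglyConnected)
    (hteeth : ∀ N, ∃ i, N ≤ i ∧ C.tooth i ∈ D'.verts) :
    ∃ f g : ℕ → V, Function.Injective f ∧ Function.Injective g ∧
      outRay f ⊆ D' ∧ inRay g ⊆ D' ∧ Set.range f ∩ Set.range g = ∅ := by
  obtain ⟨M⟩ := hm
  obtain ⟨f, hf, hfD, hfc⟩ := C.exists_outRay_carriesC M hsc hteeth
  obtain ⟨g, hg, hgD, hga⟩ := C.reverse.exists_outRay_carriesC M.reverse hsc.reverse hteeth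
  refine ⟨f, g, hf, hg, hfD, ⟨hgD.1, fun _ ⟨n, he⟩ => he ▸ hgD.2 ⟨n, rfl⟩⟩, ?_⟩
  refine Set.eq_empty_of_forall_notMem fun x ⟨⟨i, hi⟩, ⟨j, hj⟩⟩ => ?_
  obtain ⟨m, hm⟩ := C.exists_eq_c_of_carriesC M (hi ▸ hfD.1 ⟨i, rfl⟩) (hi ▸ hfc i)
  obtain ⟨m', hm'⟩ := C.reverse.exists_eq_c_of_carriesC M.reverse (hj ▸ hgD.1 ⟨j, rfl⟩)
    (hj ▸ hga j)
  exact C.a_ne_c m' m (hm'.symm.trans hm)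

end ChainFrame

/-- A chain of triangles as in `IsChainOfTriangles`, without its graph and teeth. -/
structure TriangleChain (V : Type u) where
  a : ℕ → V
  b : ℕ → V
  c : ℕ → V
  q : ℕ → List V
  injective : Function.Injective fun p : ℕ × Fin 3 => ![a, b, c] p.2 p.1
  head_q : ∀ i, (q i).head? = some (b i)
  tail_q : ∀ i, ∀ v ∈ (q i).tail, ∀ j, v ≠ a j ∧ v ≠ b j ∧ v ≠ c j
  disjoint_q : ∀ i j, i ≠ j → ∀ v ∈ q i, v ∉ q j

namespace TriangleChain

variable (T : TriangleChain V)

def graph : DGraph V := chainCore T.a T.b T.c ∪ iUnion fun i => doubleOfList (T.q i)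

def InCol (i : ℕ) (v : V) : Prop := (∃ s : Fin 3, ![T.a, T.b, T.c] s i = v) ∨ v ∈ (T.q i).tail

variable {T}

theorem abc_injective {s t : Fin 3} {i j : ℕ} (h : ![T.a, T.b, T.c] s i = ![T.a, T.b, T.c] t j) :
    i = j ∧ s = t :=
  Prod.ext_iff.1 (T.injective (a₁ := (i, s)) (a₂ := (j, t)) h)

theorem abc_notMem_tail (s : Fin 3) (i j : ℕ) : ![T.a, T.b, T.c] s i ∉ (T.q j).tail := by
  intro h
  have := T.tail_q j _ h i
  fin_cases s <;> simp_all

theorem mem_q_iff {i : ℕ} {v : V} : v ∈ T.q i ↔ v = T.b i ∨ v ∈ (T.q i).tail := by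
  obtain ⟨l, hl⟩ := List.head?_eq_some_iff.1 (T.head_q i)
  simp [hl]

theorem eq_of_mem_q {i j : ℕ} {v : V} (hi : v ∈ T.q i) (hj : v ∈ T.q j) : i = j := by
  by_contra h
  exact T.disjoint_q i j h v hi hj

theorem InCol.unique {i j : ℕ} {v : V} (hi : T.InCol i v) (hj : T.InCol j v) : i = j := by
  rcases hi with ⟨s, rfl⟩ | hi <;> rcases hj with ⟨t, ht⟩ | hj
  · exact (abc_injective ht.symm).1
  · exact absurd hj (abc_notMem_tail s i j)
  · exact absurd (ht ▸ hi) (abc_notMem_tail t j i)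
  · exact eq_of_mem_q (List.mem_of_mem_tail hi) (List.mem_of_mem_tail hj)

theorem inCol_of_mem_q {i : ℕ} {v : V} (h : v ∈ T.q i) : T.InCol i v := by
  rcases mem_q_iff.1 h with rfl | h
  · exact .inl ⟨1, rfl⟩
  · exact .inr h

open Classical in
noncomputable def col (T : TriangleChain V) (v : V) : ℕ :=
  if h : ∃ i, T.InCol i v then h.choose else 0

theorem col_eq {i : ℕ} {v : V} (h : T.InCol i v) : T.col v = i := by
  have hex : ∃ i, T.InCol i v := ⟨i, h⟩
  rw [col, dif_pos hex]
  exact hex.choose_spec.unique h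

theorem col_a (i : ℕ) : T.col (T.a i) = i := col_eq (.inl ⟨0, rfl⟩)
theorem col_b (i : ℕ) : T.col (T.b i) = i := col_eq (.inl ⟨1, rfl⟩)
theorem col_c (i : ℕ) : T.col (T.c i) = i := col_eq (.inl ⟨2, rfl⟩)

theorem col_of_mem_q {i : ℕ} {v : V} (h : v ∈ T.q i) : T.col v = i := col_eq (inCol_of_mem_q h)

theorem abc_notMem_q {s : Fin 3} (hs : s ≠ 1) (i j : ℕ) : ![T.a, T.b, T.c] s j ∉ T.q i := by
  intro h
  rcases mem_q_iff.1 h with h | h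
  · exact hs (abc_injective (t := 1) h).2
  · exact abc_notMem_tail s j i h

theorem a_notMem_q (i j : ℕ) : T.a j ∉ T.q i := abc_notMem_q (s := 0) (by decide) i j
theorem c_notMem_q (i j : ℕ) : T.c j ∉ T.q i := abc_notMem_q (s := 2) (by decide) i j

theorem a_ne_c (i j : ℕ) : T.a i ≠ T.c j := fun h => by
  have := (abc_injective (s := 0) (t := 2) h).2
  simp at this

theorem edge_cases {u v : V} (h : (u, v) ∈ T.graph.edges) :
    (∃ i, (u = T.a i ∧ v = T.b i) ∨ (u = T.b i ∧ v = T.c i) ∨ (u = T.c i ∧ v = T.a i) ∨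
      (u = T.a (i + 1) ∧ v = T.a i) ∨ (u = T.c i ∧ v = T.c (i + 1))) ∨
    ∃ i, u ∈ T.q i ∧ v ∈ T.q i := by
  rcases h with ⟨i, h⟩ | h
  · simp only [Prod.mk.injEq] at h
    exact .inl ⟨i, h⟩
  · obtain ⟨_, ⟨i, rfl⟩, h | h⟩ := h
    · have := List.of_mem_zip h
      exact .inr ⟨i, this.1, List.mem_of_mem_tail this.2⟩
    · have := List.of_mem_zip h
      exact .inr ⟨i, List.mem_of_mem_tail this.2, this.1⟩

theorem right_edge {u v : V} {k : ℕ} (h : (u, v) ∈ T.graph.edges) (hu : T.col u ≤ k)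
    (hv : k < T.col v) : u = T.c k ∧ v = T.c (k + 1) := by
  rcases T.edge_cases h with
    ⟨i, ⟨rfl, rfl⟩ | ⟨rfl, rfl⟩ | ⟨rfl, rfl⟩ | ⟨rfl, rfl⟩ | ⟨rfl, rfl⟩⟩ | ⟨i, hu', hv'⟩
  all_goals try simp only [col_a, col_b, col_c] at hu hv
  · omega
  · omega
  · omega
  · omega
  · obtain rfl : i = k := by omega
    exact ⟨rfl, rfl⟩
  · rw [col_of_mem_q hu'] at hu
    rw [col_of_mem_q hv'] at hv
    omega

theorem left_edge {u v : V} {k : ℕ} (h : (u, v) ∈ T.graph.edges) (hv : T.col v ≤ k)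
    (hu : k < T.col u) : u = T.a (k + 1) ∧ v = T.a k := by
  rcases T.edge_cases h with
    ⟨i, ⟨rfl, rfl⟩ | ⟨rfl, rfl⟩ | ⟨rfl, rfl⟩ | ⟨rfl, rfl⟩ | ⟨rfl, rfl⟩⟩ | ⟨i, hu', hv'⟩
  all_goals try simp only [col_a, col_b, col_c] at hu hv
  · omega
  · omega
  · omega
  · obtain rfl : i = k := by omega
    exact ⟨rfl, rfl⟩
  · omega
  · rw [col_of_mem_q hu'] at hu
    rw [col_of_mem_q hv'] at hv
    omega

theorem exit_edge {u v : V} {i : ℕ} (h : (u, v) ∈ T.graph.edges) (hu : u ∈ T.q i)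
    (hv : v ∉ T.q i) : v = T.c i := by
  rcases T.edge_cases h with
    ⟨j, ⟨rfl, rfl⟩ | ⟨rfl, rfl⟩ | ⟨rfl, rfl⟩ | ⟨rfl, rfl⟩ | ⟨rfl, rfl⟩⟩ | ⟨j, hu', hv'⟩
  · exact absurd hu (a_notMem_q i j)
  · have := col_of_mem_q hu
    rw [col_b] at this
    rw [this]
  · exact absurd hu (c_notMem_q i j)
  · exact absurd hu (a_notMem_q i (j + 1))
  · exact absurd hu (c_notMem_q i j)
  · exact absurd (eq_of_mem_q hu hu' ▸ hv') hv

theorem entry_edge {u v : V} {i : ℕ} (h : (u, v) ∈ T.graph.edges) (hu : u ∉ T.q i)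
    (hv : v ∈ T.q i) : u = T.a i := by
  rcases T.edge_cases h with
    ⟨j, ⟨rfl, rfl⟩ | ⟨rfl, rfl⟩ | ⟨rfl, rfl⟩ | ⟨rfl, rfl⟩ | ⟨rfl, rfl⟩⟩ | ⟨j, hu', hv'⟩
  · have := col_of_mem_q hv
    rw [col_b] at this
    rw [this]
  · exact absurd hv (c_notMem_q i j)
  · exact absurd hv (a_notMem_q i j)
  · exact absurd hv (a_notMem_q i j)
  · exact absurd hv (c_notMem_q i (j + 1))
  · exact absurd (eq_of_mem_q hv hv' ▸ hu') hu

theorem q_ne_nil (i : ℕ) : T.q i ≠ [] := fun h => by simpa [h] using T.head_q i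

variable (T)

noncomputable def tooth (i : ℕ) : V := (T.q i).getLast (q_ne_nil i)

noncomputable def frame : ChainFrame V where
  D := T.graph
  col := T.col
  a := T.a
  c := T.c
  Q i := {v | v ∈ T.q i}
  tooth := T.tooth
  col_a := col_a
  col_c := col_c
  a_ne_c := a_ne_c
  tooth_mem _ := List.getLast_mem _
  col_of_mem _ _ := col_of_mem_q
  right_edge _ _ _ := right_edge
  left_edge _ _ _ := left_edge
  exit_edge _ _ _ := exit_edge
  entry_edge _ _ _ := entry_edge

end TriangleChain

theorem IsChainOfTriangles.exists_triangleChain {D : DGraph V} {teeth : Set V}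
    (h : D.IsChainOfTriangles teeth) :
    ∃ T : TriangleChain V, T.graph = D ∧ teeth ⊆ Set.range T.frame.tooth := by
  obtain ⟨a, b, c, q, hinj, hq, htail, hdisj, rfl, rfl⟩ := h
  refine ⟨⟨a, b, c, q, hinj, fun i => (hq i).2, htail, hdisj⟩, rfl, ?_⟩
  rintro v ⟨i, hi⟩
  exact ⟨i, Option.some_injective _ ((List.getLast?_eq_some_getLast _).symm.trans hi)⟩

/-! ### Rays in stars, dominated directed rays and combs -/

def Linked (G : DGraph V) (u v : V) : Prop := (u, v) ∈ G.edges ∨ (v, u) ∈ G.edges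

theorem linked_of_outRay_subset {f : ℕ → V} (h : outRay f ⊆ G) (n : ℕ) :
    G.Linked (f n) (f (n + 1)) :=
  .inl (h.2 ⟨n, rfl⟩)

theorem linked_of_inRay_subset {f : ℕ → V} (h : inRay f ⊆ G) (n : ℕ) :
    G.Linked (f n) (f (n + 1)) :=
  .inr (h.2 ⟨n, rfl⟩)

theorem not_inRay_subset_domOutRay {f g : ℕ → V} (hf : Function.Injective f)
    (hg : Function.Injective g) : ¬ inRay g ⊆ domOutRay f := fun h => by
  choose φ hφ using fun n => h.1 ⟨n, rfl⟩
  refine not_injective_of_forall_eq_zero_or_eq_succ (φ := φ) (fun n => ?_)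
    (fun i j hij => hg (by rw [← hφ i, ← hφ j, hij]))
  rcases h.2 ⟨n, rfl⟩ with ⟨m, hm⟩ | ⟨m, hm⟩ <;>
    simp only [Prod.mk.injEq, ← hφ] at hm
  · exact .inr (by rw [hf hm.1, hf hm.2])
  · exact .inl (hf hm.2)

theorem not_outRay_subset_domInRay {f g : ℕ → V} (hf : Function.Injective f)
    (hg : Function.Injective g) : ¬ outRay g ⊆ domInRay f := fun h => by
  choose φ hφ using fun n => h.1 ⟨n, rfl⟩
  refine not_injective_of_forall_eq_zero_or_eq_succ (φ := φ) (fun n => ?_)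
    (fun i j hij => hg (by rw [← hφ i, ← hφ j, hij]))
  rcases h.2 ⟨n, rfl⟩ with ⟨m, hm⟩ | ⟨m, hm⟩ <;>
    simp only [Prod.mk.injEq, ← hφ] at hm
  · exact .inr (by rw [hf hm.1, hf hm.2])
  · exact .inl (hf hm.1)

theorem not_isDominatedDirectedRay {f g : ℕ → V} (hf : Function.Injective f)
    (hg : Function.Injective g) (hfG : outRay f ⊆ G) (hgG : inRay g ⊆ G) :
    ¬ G.IsDominatedDirectedRay := by
  rintro ⟨h, hh, rfl | rfl⟩
  · exact not_inRay_subset_domOutRay hh hg hgG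
  · exact not_outRay_subset_domInRay hh hf hfG

structure HasPendants (G : DGraph V) (K : Set V) (B : ℕ → Set V) (x : ℕ → V) : Prop where
  finite : ∀ n, (B n).Finite
  disjoint : ∀ m n, m ≠ n → Disjoint (B m) (B n)
  disjoint_core : ∀ n, Disjoint (B n) K
  attach_mem : ∀ n, x n ∈ K
  edge_mem : ∀ e ∈ G.edges,
    (e.1 ∈ K ∧ e.2 ∈ K) ∨ ∃ n, e.1 ∈ insert (x n) (B n) ∧ e.2 ∈ insert (x n) (B n)

namespace HasPendants

variable {K : Set V} {B : ℕ → Set V} {x : ℕ → V}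

theorem linked_cases (hG : G.HasPendants K B x) {u v : V} (h : G.Linked u v) :
    (u ∈ K ∧ v ∈ K) ∨ ∃ n, u ∈ insert (x n) (B n) ∧ v ∈ insert (x n) (B n) := by
  rcases h with h | h
  · exact hG.edge_mem _ h
  · rcases hG.edge_mem _ h with ⟨h₁, h₂⟩ | ⟨n, h₁, h₂⟩
    exacts [.inl ⟨h₂, h₁⟩, .inr ⟨n, h₂, h₁⟩]

theorem notMem_core (hG : G.HasPendants K B x) {u : V} {n : ℕ} (hu : u ∈ B n) : u ∉ K :=
  Set.disjoint_left.1 (hG.disjoint_core n) hu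

theorem mem_or_eq_of_linked (hG : G.HasPendants K B x) {u v : V} {n : ℕ} (hu : u ∈ B n)
    (h : G.Linked u v) : v ∈ B n ∨ v = x n := by
  rcases hG.linked_cases h with ⟨hu', -⟩ | ⟨m, hu', hv⟩
  · exact absurd hu' (hG.notMem_core hu)
  obtain rfl : m = n := by
    rcases hu' with rfl | hu'
    · exact absurd (hG.attach_mem m) (hG.notMem_core hu)
    · by_contra hmn
      exact Set.disjoint_left.1 (hG.disjoint m n hmn) hu' hu
  exact hv.symm.imp_left id

theorem exists_eq_attach (hG : G.HasPendants K B x) {ρ : ℕ → V} (hρ : Function.Injective ρ)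
    (hw : ∀ t, G.Linked (ρ t) (ρ (t + 1))) {t n : ℕ} (ht : ρ t ∈ B n) :
    ∃ s, t ≤ s ∧ ρ s = x n := by
  by_contra! hne
  have hstay : ∀ s, t ≤ s → ρ s ∈ B n := fun s hs => by
    induction s, hs using Nat.le_induction with
    | base => exact ht
    | succ s hs ih => exact (hG.mem_or_eq_of_linked ih (hw s)).resolve_right (hne _ (by omega))
  obtain ⟨N, hN⟩ := hρ.exists_forall_ge_notMem (hG.finite n)
  exact hN (max t N) (le_max_right _ _) (hstay _ (le_max_left _ _))

theorem eventually_mem_core (hG : G.HasPendants K B x) {ρ : ℕ → V} (hρ : Function.Injective ρ)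
    (hw : ∀ t, G.Linked (ρ t) (ρ (t + 1))) : ∃ T, ∀ t, T ≤ t → ρ t ∈ K := by
  have hstay : ∀ t, ρ t ∈ K → ρ (t + 1) ∈ K := fun t ht => by
    by_contra hout
    rcases hG.linked_cases (hw t) with ⟨-, h⟩ | ⟨n, hx, hy⟩
    · exact hout h
    have hy : ρ (t + 1) ∈ B n := hy.resolve_left fun h => hout (h ▸ hG.attach_mem n)
    have hx : ρ t = x n := hx.resolve_right fun h => hG.notMem_core h ht
    obtain ⟨s, hs, hsx⟩ := hG.exists_eq_attach hρ hw hy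
    have := hρ (hsx.trans hx.symm)
    omega
  obtain ⟨T, hT⟩ : ∃ T, ρ T ∈ K := by
    rcases hG.linked_cases (hw 0) with ⟨h, -⟩ | ⟨n, h | h, -⟩
    · exact ⟨0, h⟩
    · exact ⟨0, h ▸ hG.attach_mem n⟩
    · obtain ⟨s, -, hs⟩ := hG.exists_eq_attach hρ hw h
      exact ⟨s, hs ▸ hG.attach_mem n⟩
  exact ⟨T, fun t ht => by
    induction t, ht using Nat.le_induction with
    | base => exact hT
    | succ s _ ih => exact hstay s ih⟩

end HasPendants

structure HasSpine (G : DGraph V) (P : ℕ → Set V) (r : ℕ → V) : Prop where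
  finite : ∀ k, (P k).Finite
  disjoint : ∀ j k, j ≠ k → Disjoint (P j) (P k)
  edge : ∀ u v j k, (u, v) ∈ G.edges → u ∈ P j → v ∈ P k →
    j = k ∨ (k = j + 1 ∧ u = r j) ∨ (j = k + 1 ∧ v = r k)

namespace HasSpine

variable {P : ℕ → Set V} {r : ℕ → V}

/-- The pieces are finite, so the ray reaches pieces arbitrarily far to the right, and the first
step beyond piece `k` leaves it at `r k`. -/
theorem exists_forall_ge_mem_range (hS : G.HasSpine P r) {ρ : ℕ → V} (hρ : Function.Injective ρ)
    (hw : ∀ t, G.Linked (ρ t) (ρ (t + 1))) (hP : ∀ t, ∃ k, ρ t ∈ P k) :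
    ∃ N, ∀ k, N ≤ k → r k ∈ Set.range ρ := by
  classical
  choose σ hσ using hP
  have hstep : ∀ t, σ (t + 1) ≤ σ t ∨ (σ (t + 1) = σ t + 1 ∧ ρ t = r (σ t)) := fun t => by
    rcases hw t with h | h
    · rcases hS.edge _ _ _ _ h (hσ t) (hσ (t + 1)) with h | h | ⟨h, -⟩
      exacts [.inl h.ge, .inr h, .inl (by omega)]
    · rcases hS.edge _ _ _ _ h (hσ (t + 1)) (hσ t) with h | ⟨h, -⟩ | h
      exacts [.inl h.le, .inl (by omega), .inr h]
  have hunbdd : ∀ k, ∃ t, k < σ t := fun k => by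
    by_contra! h
    obtain ⟨N, hN⟩ := hρ.exists_forall_ge_notMem
      ((Set.finite_Iic k).biUnion fun j _ => hS.finite j)
    exact hN N le_rfl (Set.mem_biUnion (h N) (hσ N))
  refine ⟨σ 0, fun k hk => ?_⟩
  obtain ⟨t, ht⟩ : ∃ t, Nat.find (hunbdd k) = t + 1 :=
    Nat.exists_eq_succ_of_ne_zero fun h0 => by
      have := Nat.find_spec (hunbdd k); rw [h0] at this; omega
  have hlt : k < σ (t + 1) := ht ▸ Nat.find_spec (hunbdd k)
  have hle : σ t ≤ k := not_lt.1 (Nat.find_min (hunbdd k) (by omega))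
  rcases hstep t with h | ⟨h, hr⟩
  · omega
  · exact ⟨t, by rw [hr, show σ t = k by omega]⟩

theorem exists_forall_ge_mem_range_of_hasPendants (hS : G.HasSpine P r) {K : Set V}
    {B : ℕ → Set V} {x : ℕ → V} (hG : G.HasPendants K B x) (hK : ∀ v ∈ K, ∃ k, v ∈ P k) {ρ : ℕ → V}
    (hρ : Function.Injective ρ) (hw : ∀ t, G.Linked (ρ t) (ρ (t + 1))) :
    ∃ N, ∀ k, N ≤ k → r k ∈ Set.range ρ := by
  obtain ⟨T, hT⟩ := hG.eventually_mem_core hρ hw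
  obtain ⟨N, hN⟩ := hS.exists_forall_ge_mem_range (ρ := fun t => ρ (T + t))
    (hρ.comp (add_right_injective T)) (fun t => hw (T + t))
    (fun t => hK _ (hT _ (Nat.le_add_right T t)))
  exact ⟨N, fun k hk => let ⟨t, ht⟩ := hN k hk; ⟨T + t, ht⟩⟩

theorem range_inter_nonempty (hS : G.HasSpine P r) {K : Set V} {B : ℕ → Set V}
    {x : ℕ → V} (hG : G.HasPendants K B x) (hK : ∀ v ∈ K, ∃ k, v ∈ P k) {f g : ℕ → V}
    (hf : Function.Injective f) (hg : Function.Injective g) (hfG : outRay f ⊆ G)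
    (hgG : inRay g ⊆ G) : (Set.range f ∩ Set.range g).Nonempty := by
  obtain ⟨N₁, h₁⟩ :=
    hS.exists_forall_ge_mem_range_of_hasPendants hG hK hf (linked_of_outRay_subset hfG)
  obtain ⟨N₂, h₂⟩ :=
    hS.exists_forall_ge_mem_range_of_hasPendants hG hK hg (linked_of_inRay_subset hgG)
  exact ⟨r (max N₁ N₂), h₁ _ (le_max_left _ _), h₂ _ (le_max_right _ _)⟩

theorem of_links {l : ℕ → V} (hfin : ∀ k, (P k).Finite)
    (hdisj : ∀ j k, j ≠ k → Disjoint (P j) (P k)) (hr : ∀ k, r k ∈ P k) (hl : ∀ k, l k ∈ P k)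
    (hedge : ∀ e ∈ G.edges, (∃ m, e.1 ∈ P m ∧ e.2 ∈ P m) ∨
      (∃ m, e = (r m, l (m + 1)) ∨ e = (l (m + 1), r m)) ∨ (∀ k, e.1 ∉ P k) ∨ ∀ k, e.2 ∉ P k) :
    G.HasSpine P r := by
  have hidx : ∀ {v j k}, v ∈ P j → v ∈ P k → j = k := fun hj hk => by
    by_contra hjk
    exact Set.disjoint_left.1 (hdisj _ _ hjk) hj hk
  refine ⟨hfin, hdisj, fun u v j k he hu hv => ?_⟩
  rcases hedge _ he with ⟨m, h₁, h₂⟩ | ⟨m, he' | he'⟩ | h | h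
  · exact .inl ((hidx hu h₁).trans (hidx hv h₂).symm)
  · obtain ⟨rfl, rfl⟩ := Prod.mk.inj he'
    obtain rfl := hidx hu (hr m)
    obtain rfl := hidx hv (hl (j + 1))
    exact .inr (.inl ⟨rfl, rfl⟩)
  · obtain ⟨rfl, rfl⟩ := Prod.mk.inj he'
    obtain rfl := hidx hv (hr m)
    obtain rfl := hidx hu (hl (k + 1))
    exact .inr (.inr ⟨rfl, rfl⟩)
  · exact absurd hu (h j)
  · exact absurd hv (h k)

end HasSpine

theorem outRay_shift_subset {H : DGraph V} {K : Set V} {f : ℕ → V} {T : ℕ}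
    (hf : outRay f ⊆ G) (hT : ∀ t, T ≤ t → f t ∈ K) (hK : K ⊆ H.verts)
    (hE : ∀ e ∈ G.edges, e.1 ∈ K → e.2 ∈ K → e ∈ H.edges) : outRay (fun n => f (T + n)) ⊆ H :=
  ⟨by rintro _ ⟨n, rfl⟩; exact hK (hT _ (by omega)),
    by rintro _ ⟨n, rfl⟩; exact hE _ (hf.2 ⟨T + n, rfl⟩) (hT _ (by omega)) (hT _ (by omega))⟩

theorem inRay_shift_subset {H : DGraph V} {K : Set V} {f : ℕ → V} {T : ℕ}
    (hf : inRay f ⊆ G) (hT : ∀ t, T ≤ t → f t ∈ K) (hK : K ⊆ H.verts)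
    (hE : ∀ e ∈ G.edges, e.1 ∈ K → e.2 ∈ K → e ∈ H.edges) : inRay (fun n => f (T + n)) ⊆ H :=
  ⟨by rintro _ ⟨n, rfl⟩; exact hK (hT _ (by omega)),
    by rintro _ ⟨n, rfl⟩; exact hE _ (hf.2 ⟨T + n, rfl⟩) (hT _ (by omega)) (hT _ (by omega))⟩

theorem mem_of_mem_doubleOfList_edges {l : List V} {e : V × V}
    (h : e ∈ (doubleOfList l).edges) : e.1 ∈ l ∧ e.2 ∈ l := by
  rcases h with h | h <;> have := List.of_mem_zip h
  · exact ⟨this.1, List.mem_of_mem_tail this.2⟩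
  · exact ⟨List.mem_of_mem_tail this.2, this.1⟩

theorem mem_insert_tail_of_head? {l : List V} {x v : V} (h : l.head? = some x) (hv : v ∈ l) :
    v ∈ insert x {w | w ∈ l.tail} := by
  obtain ⟨t, rfl⟩ := List.head?_eq_some_iff.1 h
  simpa using hv

theorem mem_of_mem_link_edges {l : List V} {x y : V} {e : V × V} (hy : y ∈ l)
    (h : e ∈ (doubleOfList l ∪ linkBoth x y).edges) :
    e.1 ∈ insert x {v | v ∈ l} ∧ e.2 ∈ insert x {v | v ∈ l} ∧ (e.1 ∈ l ∨ e.2 ∈ l) := by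
  rcases h with h | rfl | rfl
  · have := mem_of_mem_doubleOfList_edges h
    exact ⟨.inr this.1, .inr this.2, .inl this.1⟩
  · exact ⟨.inl rfl, .inr hy, .inr hy⟩
  · exact ⟨.inr hy, .inl rfl, .inl hy⟩

theorem mem_of_mem_branchGraph_edges {b : V} {l : List V} {e : V × V}
    (h : e ∈ (branchGraph b l).edges) :
    e.1 ∈ insert b {v | v ∈ l} ∧ e.2 ∈ insert b {v | v ∈ l} ∧ (e.1 ∈ l ∨ e.2 ∈ l) := by
  cases l with
  | nil => exact h.elim
  | cons y l => exact mem_of_mem_link_edges List.mem_cons_self h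

/-- A ray would eventually have to stay at the centre. -/
theorem not_isDSubdividedStar {f : ℕ → V} (hf : Function.Injective f) (hfG : outRay f ⊆ G)
    (t : Set V) : ¬ G.IsDSubdividedStar t := by
  rintro ⟨c, q, hq, hsep, hGeq, -⟩
  have hc : ∀ n, c ∉ (q n).tail := fun n => by
    obtain ⟨l, hl⟩ := List.head?_eq_some_iff.1 (hq n).2.1
    have := (hq n).1
    rw [hl] at this ⊢
    exact (List.nodup_cons.1 this).1
  have hpend : G.HasPendants {c} (fun n => {v | v ∈ (q n).tail}) (fun _ => c) :=
    { finite := fun n => List.finite_toSet _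
      disjoint := fun m n hmn => Set.disjoint_left.2 fun v hm hn => hc n <|
        hsep m n hmn v (List.mem_of_mem_tail hm) (List.mem_of_mem_tail hn) ▸ hn
      disjoint_core := fun n => Set.disjoint_singleton_right.2 (hc n)
      attach_mem := fun _ => rfl
      edge_mem := by
        rw [hGeq]
        rintro e ⟨_, ⟨n, rfl⟩, he⟩
        have := mem_of_mem_doubleOfList_edges he
        exact .inr ⟨n, mem_insert_tail_of_head? (hq n).2.1 this.1,
          mem_insert_tail_of_head? (hq n).2.1 this.2⟩ }
  obtain ⟨T, hT⟩ := hpend.eventually_mem_core hf (linked_of_outRay_subset hfG)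
  obtain ⟨N, hN⟩ := hf.exists_forall_ge_notMem (Set.finite_singleton c)
  exact hN (max T N) (le_max_right _ _) (hT _ (le_max_left _ _))

/-- A ray eventually stays in the dominated directed ray at the centre, which contains no in-ray
when it is built on an out-ray, and no out-ray when it is built on an in-ray. -/
theorem not_isRayCentreStar {f g : ℕ → V} (hf : Function.Injective f)
    (hg : Function.Injective g) (hfG : outRay f ⊆ G) (hgG : inRay g ⊆ G) (t : Set V) :
    ¬ G.IsRayCentreStar t := by
  rintro ⟨s, R, y, q, hs, hR, hq, hqs, hqd, hGeq, -⟩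
  have hyq : ∀ n, y n ∈ q n := fun n => List.mem_of_mem_head? (hq n).2
  have hRv : Set.range s ⊆ R.verts := by rcases hR with rfl | rfl <;> exact subset_rfl
  have hRe : ∀ e ∈ R.edges, e.1 ∈ Set.range s ∧ e.2 ∈ Set.range s := by
    rcases hR with rfl | rfl <;> rintro _ (⟨m, rfl⟩ | ⟨m, rfl⟩) <;> exact ⟨⟨_, rfl⟩, ⟨_, rfl⟩⟩
  have hpend : G.HasPendants (Set.range s) (fun n => {v | v ∈ q n}) s :=
    { finite := fun n => List.finite_toSet _
      disjoint := fun m n hmn => Set.disjoint_left.2 (hqd m n hmn)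
      disjoint_core := fun n => Set.disjoint_left.2 (hqs n)
      attach_mem := fun n => ⟨n, rfl⟩
      edge_mem := by
        rw [hGeq]
        rintro e (he | ⟨_, ⟨n, rfl⟩, he⟩)
        · exact .inl (hRe e he)
        · have := mem_of_mem_link_edges (hyq n) he
          exact .inr ⟨n, this.1, this.2.1⟩ }
  have hcore : ∀ e ∈ G.edges, e.1 ∈ Set.range s → e.2 ∈ Set.range s → e ∈ R.edges := by
    rw [hGeq]
    rintro e (he | ⟨_, ⟨n, rfl⟩, he⟩) h₁ h₂
    · exact he
    · rcases (mem_of_mem_link_edges (hyq n) he).2.2 with h | h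
      exacts [absurd h₁ (hqs n _ h), absurd h₂ (hqs n _ h)]
  rcases hR with rfl | rfl
  · obtain ⟨T, hT⟩ := hpend.eventually_mem_core hg (linked_of_inRay_subset hgG)
    exact not_inRay_subset_domOutRay hs (hg.comp (add_right_injective T))
      (inRay_shift_subset hgG hT hRv hcore)
  · obtain ⟨T, hT⟩ := hpend.eventually_mem_core hf (linked_of_outRay_subset hfG)
    exact not_outRay_subset_domInRay hs (hf.comp (add_right_injective T))
      (outRay_shift_subset hfG hT hRv hcore)

theorem range_inter_nonempty_of_isDComb {f g : ℕ → V} (hf : Function.Injective f)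
    (hg : Function.Injective g) (hfG : outRay f ⊆ G) (hgG : inRay g ⊆ G) {t : Set V}
    (h : G.IsDComb t) : (Set.range f ∩ Set.range g).Nonempty := by
  obtain ⟨s, α, q, hs, -, hq, hqt, hqd, hGeq, -⟩ := h
  have hsq : ∀ n j, s j ∈ q n → j = α n := fun n j hj => hs <| by
    rcases mem_insert_tail_of_head? (hq n).2 hj with h | h
    exacts [h, absurd ⟨j, rfl⟩ (hqt n _ h)]
  have hpend : G.HasPendants (Set.range s) (fun n => {v | v ∈ (q n).tail}) (fun n => s (α n)) :=
    { finite := fun n => List.finite_toSet _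
      disjoint := fun m n hmn => Set.disjoint_left.2 fun v hm =>
        hqd m n hmn v (List.mem_of_mem_tail hm) ∘ List.mem_of_mem_tail
      disjoint_core := fun n => Set.disjoint_left.2 (hqt n)
      attach_mem := fun n => ⟨α n, rfl⟩
      edge_mem := by
        rw [hGeq]
        rintro e ((⟨m, rfl⟩ | ⟨m, rfl⟩) | ⟨_, ⟨n, rfl⟩, he⟩)
        · exact .inl ⟨⟨m, rfl⟩, ⟨m + 1, rfl⟩⟩
        · exact .inl ⟨⟨m + 1, rfl⟩, ⟨m, rfl⟩⟩
        · have := mem_of_mem_doubleOfList_edges he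
          exact .inr ⟨n, mem_insert_tail_of_head? (hq n).2 this.1,
            mem_insert_tail_of_head? (hq n).2 this.2⟩ }
  have hspine : G.HasSpine (fun k => {s k}) s :=
    { finite := fun k => Set.finite_singleton _
      disjoint := fun j k hjk => Set.disjoint_singleton.2 (hs.ne hjk)
      edge := by
        rw [hGeq]
        rintro u v j k ((⟨m, hm⟩ | ⟨m, hm⟩) | ⟨_, ⟨n, rfl⟩, he⟩) rfl rfl
        · obtain ⟨h₁, h₂⟩ := Prod.mk.inj hm
          exact .inr (.inl ⟨by rw [hs h₁, hs h₂], rfl⟩)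
        · obtain ⟨h₁, h₂⟩ := Prod.mk.inj hm
          exact .inr (.inr ⟨by rw [hs h₁, hs h₂], rfl⟩)
        · have := mem_of_mem_doubleOfList_edges he
          exact .inl ((hsq n j this.1).trans (hsq n k this.2).symm) }
  exact hspine.range_inter_nonempty hpend (fun v ⟨k, hk⟩ => ⟨k, hk.symm⟩) hf hg hfG hgG

theorem finite_verts_and_edges_mem_triangle (x y z : V) : (triangle x y z).verts.Finite ∧
    ∀ e ∈ (triangle x y z).edges, e.1 ∈ (triangle x y z).verts ∧ e.2 ∈ (triangle x y z).verts :=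
  ⟨Set.toFinite {x, y, z}, by rintro e (rfl | rfl | rfl) <;> simp [triangle]⟩

theorem range_inter_nonempty_of_isTriangleComb {f g : ℕ → V} (hf : Function.Injective f)
    (hg : Function.Injective g) (hfG : outRay f ⊆ G) (hgG : inRay g ⊆ G) {t : Set V}
    (h : G.IsTriangleComb t) : (Set.range f ∩ Set.range g).Nonempty := by
  obtain ⟨α, q, S, L, R, B, -, -, hSd, -, hqd, hqS, hLRB, hsingle, htri, -, -, -, -, hGeq, -⟩ := h
  have hpiece : ∀ k, (S k).verts.Finite ∧
      ∀ e ∈ (S k).edges, e.1 ∈ (S k).verts ∧ e.2 ∈ (S k).verts := fun k => by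
    by_cases hk : ∃ n, α n = k ∧ 1 ≤ k
    · obtain ⟨n, rfl, hn⟩ := hk
      obtain ⟨x, y, z, -, -, -, hxyz⟩ := htri n hn
      exact hxyz ▸ finite_verts_and_edges_mem_triangle x y z
    · obtain ⟨v, hv⟩ := hsingle k hk
      rw [hv]
      exact ⟨Set.finite_singleton v, fun e he => he.elim⟩
  have hpend : G.HasPendants (⋃ k, (S k).verts) (fun n => {v | v ∈ q n}) (fun n => B (α n)) :=
    { finite := fun n => List.finite_toSet _
      disjoint := fun m n hmn => Set.disjoint_left.2 (hqd m n hmn)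
      disjoint_core := fun n => Set.disjoint_left.2 fun v hv hS =>
        let ⟨k, hk⟩ := Set.mem_iUnion.1 hS; hqS n v hv k hk
      attach_mem := fun n => Set.mem_iUnion.2 ⟨_, (hLRB _).2.2⟩
      edge_mem := by
        rw [hGeq]
        rintro e ((⟨_, ⟨k, rfl⟩, he⟩ | ⟨_, ⟨k, rfl⟩, rfl | rfl⟩) | ⟨_, ⟨n, rfl⟩, he⟩)
        · have := (hpiece k).2 e he
          exact .inl ⟨Set.mem_iUnion.2 ⟨k, this.1⟩, Set.mem_iUnion.2 ⟨k, this.2⟩⟩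
        · exact .inl ⟨Set.mem_iUnion.2 ⟨k, (hLRB k).2.1⟩, Set.mem_iUnion.2 ⟨k + 1, (hLRB _).1⟩⟩
        · exact .inl ⟨Set.mem_iUnion.2 ⟨k + 1, (hLRB _).1⟩, Set.mem_iUnion.2 ⟨k, (hLRB k).2.1⟩⟩
        · have := mem_of_mem_branchGraph_edges he
          exact .inr ⟨n, this.1, this.2.1⟩ }
  have hspine : G.HasSpine (fun k => (S k).verts) R := by
    refine .of_links (l := L) (fun k => (hpiece k).1)
      (fun j k hjk => Set.disjoint_iff_inter_eq_empty.2 (hSd j k hjk)) (fun k => (hLRB k).2.1)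
      (fun k => (hLRB k).1) ?_
    rw [hGeq]
    rintro e ((⟨_, ⟨m, rfl⟩, he⟩ | ⟨_, ⟨m, rfl⟩, he⟩) | ⟨_, ⟨n, rfl⟩, he⟩)
    · exact .inl ⟨m, (hpiece m).2 e he⟩
    · exact .inr (.inl ⟨m, he⟩)
    · rcases (mem_of_mem_branchGraph_edges he).2.2 with h | h
      exacts [.inr (.inr (.inl (hqS n _ h))), .inr (.inr (.inr (hqS n _ h)))]
  exact hspine.range_inter_nonempty hpend (fun v hv => Set.mem_iUnion.1 hv) hf hg hfG hgG

end DGraph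

/-- Let `D` be a chain of triangles and let `D'` be a
strongly connected butterfly minor of `D` containing infinitely many teeth of
`D`.  Then `D'` contains two disjoint rays, namely an out-ray and an in-ray
that are vertex-disjoint; consequently `D'` is not shaped by a star, not a
dominated directed ray, and not shaped by a comb. -/
theorem chain_of_triangles_butterfly_minors {V : Type u} (D D' : DGraph V)
    (teeth : Set V) (hD : DGraph.IsChainOfTriangles D teeth)
    (hm : D.IsButterflyMinor D') (hsc : D'.StronglyConnected)
    (hteeth : (D'.verts ∩ teeth).Infinite) :
    (∃ f g : ℕ → V, Function.Injective f ∧ Function.Injective g ∧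
      DGraph.outRay f ⊆ D' ∧ DGraph.inRay g ⊆ D' ∧
      Set.range f ∩ Set.range g = ∅) ∧
    (∀ t' : Set V, ¬ DGraph.IsShapedByStar D' t') ∧
    ¬ DGraph.IsDominatedDirectedRay D' ∧
    (∀ t' : Set V, ¬ DGraph.IsShapedByComb D' t') := by
  obtain ⟨T, rfl, hteethT⟩ := hD.exists_triangleChain
  obtain ⟨f, g, hf, hg, hfD, hgD, hdisj⟩ := T.frame.exists_disjoint_rays hm hsc
    (exists_ge_mem_of_infinite (hteeth.mono (Set.inter_subset_inter_right _ hteethT)))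
  have hmeet : ¬ (Set.range f ∩ Set.range g).Nonempty := by
    rw [hdisj]; exact Set.not_nonempty_empty
  refine ⟨⟨f, g, hf, hg, hfD, hgD, hdisj⟩, ?_, DGraph.not_isDominatedDirectedRay hf hg hfD hgD, ?_⟩
  · rintro t' (⟨hdom, -⟩ | hstar | hstar)
    · exact DGraph.not_isDominatedDirectedRay hf hg hfD hgD hdom
    · exact DGraph.not_isDSubdividedStar hf hfD t' hstar
    · exact DGraph.not_isRayCentreStar hf hg hfD hgD t' hstar
  · rintro t' (hcomb | hcomb)
    · exact hmeet (DGraph.range_inter_nonempty_of_isDComb hf hg hfD hgD hcomb)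
    · exact hmeet (DGraph.range_inter_nonempty_of_isTriangleComb hf hg hfD hgD hcomb)
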